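/- arXiv:1212.6097 — 5 statements merged into one kernel-verified Lean document; each statement's English description precedes it below -/
import Mathlib

section
/- Consider the Euler–Poisson equations Ṁ = M × Ω + Γ × χ, Γ̇ = Γ × Ω with M = IΩ, I = diag(I₁,I₂,I₃), I₁ > I₂ > I₃ > 0, and χ = (X₀, 0, Z₀) satisfying the Hess–Appel'rot condition X₀√(I₁(I₂−I₃)) + Z₀√(I₃(I₁−I₂)) = 0. Then the function F₄ = M₁X₀ + M₃Z₀ satisfies an identity of the form Ḟ₄ = g(M)·F₄ along solutions for some function g; in particular, if F₄ = 0 at the initial time, then F₄ = 0 for all time. -/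
open Matrix

/-- Hess–Appel'rot invariant relation: under the Hess–Appel'rot conditions the
function `F₄ = M₁X₀ + M₃Z₀` satisfies `Ḟ₄ = g(M)·F₄` along solutions of the
Euler–Poisson equations; in particular `F₄ = 0` is an invariant surface. -/
theorem hess_appelrot_invariant_relation
    (I1 I2 I3 X0 Z0 : ℝ)
    (hI : I1 > I2 ∧ I2 > I3 ∧ I3 > 0)
    (hHA : X0 * Real.sqrt (I1 * (I2 - I3)) + Z0 * Real.sqrt (I3 * (I1 - I2)) = 0)
    (χ : Fin 3 → ℝ) (hχ : χ = ![X0, 0, Z0])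
    (M Γ : ℝ → Fin 3 → ℝ)
    (Ω : ℝ → Fin 3 → ℝ) (hΩ : ∀ t i, Ω t i = M t i / ![I1, I2, I3] i)
    (hM : ∀ t, HasDerivAt M (crossProduct (M t) (Ω t) + crossProduct (Γ t) χ) t)
    (hΓ : ∀ t, HasDerivAt Γ (crossProduct (Γ t) (Ω t)) t) :
    (∃ g : (Fin 3 → ℝ) → ℝ, ∀ t,
        HasDerivAt (fun s => M s 0 * X0 + M s 2 * Z0)
          (g (M t) * (M t 0 * X0 + M t 2 * Z0)) t) ∧
    (M 0 0 * X0 + M 0 2 * Z0 = 0 → ∀ t, M t 0 * X0 + M t 2 * Z0 = 0) := by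
  obtain ⟨h12, h23, h3⟩ := hI
  have hI2 : I2 > 0 := by linarith
  have hI1 : I1 > 0 := by linarith
  -- squared Hess–Appel'rot condition
  have h1 : (0:ℝ) ≤ I1 * (I2 - I3) := by nlinarith
  have h2 : (0:ℝ) ≤ I3 * (I1 - I2) := by nlinarith
  have hHA2 : X0 ^ 2 * (I1 * (I2 - I3)) = Z0 ^ 2 * (I3 * (I1 - I2)) := by
    have heq : X0 * Real.sqrt (I1 * (I2 - I3)) = -(Z0 * Real.sqrt (I3 * (I1 - I2))) := by
      linarith
    have heq2 : (X0 * Real.sqrt (I1 * (I2 - I3))) ^ 2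
        = (Z0 * Real.sqrt (I3 * (I1 - I2))) ^ 2 := by rw [heq]; ring
    rwa [mul_pow, mul_pow, Real.sq_sqrt h1, Real.sq_sqrt h2] at heq2
  set c : ℝ := if Z0 = 0 then 0 else X0 * (I2 - I3) / (I2 * I3 * Z0) with hc
  have hX0zero : Z0 = 0 → X0 = 0 := by
    intro hZ
    have : X0 ^ 2 * (I1 * (I2 - I3)) = 0 := by rw [hHA2, hZ]; ring
    have hpos : I1 * (I2 - I3) > 0 := by nlinarith
    have : X0 ^ 2 = 0 := by
      rcases mul_eq_zero.1 this with h | h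
      · exact h
      · exact absurd h (ne_of_gt hpos)
    exact pow_eq_zero_iff (by norm_num) |>.1 this
  have hcz : c * Z0 = X0 * (1 / I3 - 1 / I2) := by
    by_cases hZ : Z0 = 0
    · rw [hX0zero hZ, hZ]; ring
    · rw [hc, if_neg hZ]
      field_simp
  have hcx : c * X0 = Z0 * (1 / I2 - 1 / I1) := by
    by_cases hZ : Z0 = 0
    · rw [hX0zero hZ, hZ]; ring
    · rw [hc, if_neg hZ]
      rw [div_mul_eq_mul_div, div_eq_iff (by positivity : I2 * I3 * Z0 ≠ 0)]
      field_simp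
      nlinarith [hHA2]
  have hkey : ∀ m1 m2 m3 : ℝ,
      X0 * (m2 * m3 * (1 / I3 - 1 / I2)) + Z0 * (m1 * m2 * (1 / I2 - 1 / I1))
        = c * m2 * (m1 * X0 + m3 * Z0) := by
    intro m1 m2 m3
    linear_combination (-(m1 * m2)) * hcx + (-(m2 * m3)) * hcz
  -- derivative of F₄
  have hF : ∀ t, HasDerivAt (fun s => M s 0 * X0 + M s 2 * Z0)
      (c * M t 1 * (M t 0 * X0 + M t 2 * Z0)) t := by
    intro t
    have hM0 : HasDerivAt (fun s => M s 0)
        ((crossProduct (M t) (Ω t) + crossProduct (Γ t) χ) 0) t :=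
      hasDerivAt_pi.1 (hM t) 0
    have hM2 : HasDerivAt (fun s => M s 2)
        ((crossProduct (M t) (Ω t) + crossProduct (Γ t) χ) 2) t :=
      hasDerivAt_pi.1 (hM t) 2
    have hD := (hM0.mul_const X0).add (hM2.mul_const Z0)
    have hval : (crossProduct (M t) (Ω t) + crossProduct (Γ t) χ) 0 * X0
        + (crossProduct (M t) (Ω t) + crossProduct (Γ t) χ) 2 * Z0
        = c * M t 1 * (M t 0 * X0 + M t 2 * Z0) := by
      simp only [cross_apply, hχ, Pi.add_apply]
      simp only [Matrix.cons_val_zero, Matrix.cons_val_one, Matrix.head_cons,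
        Matrix.cons_val_two, Matrix.tail_cons]
      rw [hΩ t 0, hΩ t 1, hΩ t 2]
      simp only [Matrix.cons_val_zero, Matrix.cons_val_one, Matrix.head_cons,
        Matrix.cons_val_two, Matrix.tail_cons]
      have := hkey (M t 0) (M t 1) (M t 2)
      field_simp at this ⊢
      linarith [this]
    exact hval ▸ hD
  refine ⟨⟨fun m => c * m 1, fun t => hF t⟩, ?_⟩
  -- invariance via the exponential trick
  intro h0 t
  set F : ℝ → ℝ := fun s => M s 0 * X0 + M s 2 * Z0 with hFdef
  have hMcont : Continuous M := by
    rw [continuous_iff_continuousAt]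
    exact fun s => (hM s).continuousAt
  have hacont : Continuous (fun s => c * M s 1) :=
    continuous_const.mul ((continuous_apply (1 : Fin 3)).comp hMcont)
  set A : ℝ → ℝ := fun s => ∫ u in (0:ℝ)..s, c * M u 1 with hAdef
  have hA : ∀ s, HasDerivAt A (c * M s 1) s := fun s =>
    (hacont.integral_hasStrictDerivAt 0 s).hasDerivAt
  have hu : ∀ s, HasDerivAt (fun r => F r * Real.exp (-A r)) 0 s := by
    intro s
    have h1 := (hF s).mul (((hA s).neg).exp)
    have : c * M s 1 * (M s 0 * X0 + M s 2 * Z0) * Real.exp (-A s)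
        + F s * (Real.exp (-A s) * -(c * M s 1)) = 0 := by
      simp only [hFdef]; ring
    exact this ▸ h1
  have hconst : ∀ s, F s * Real.exp (-A s) = F 0 * Real.exp (-A 0) := by
    intro s
    have hdiff : Differentiable ℝ (fun r => F r * Real.exp (-A r)) :=
      fun r => (hu r).differentiableAt
    have hderiv : ∀ r, deriv (fun r => F r * Real.exp (-A r)) r = 0 :=
      fun r => (hu r).deriv
    exact is_const_of_deriv_eq_zero hdiff hderiv s 0
  have h00 : F 0 = 0 := h0
  have := hconst t
  rw [h00, zero_mul] at this
  have hFt : F t = 0 := by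
    have hexp : Real.exp (-A t) ≠ 0 := Real.exp_ne_zero _
    exact (mul_eq_zero.1 this).resolve_right hexp
  exact hFt
end

section
/- Let M, Γ, Ω, χ denote the 3×3 skew-symmetric matrices corresponding to vectors M, Γ, Ω, χ ∈ ℝ³ under the hat isomorphism, and suppose additionally C = I₂·χ and the invariant relation M₁X₀ + M₃Z₀ = 0 with χ = (X₀,0,Z₀) and M = IΩ for I = diag(I₁,I₂,I₃) satisfying the Hess–Appel'rot condition. Then the matrix Lax equation d/dt(λ²C + λM + Γ) = [λ²C + λM + Γ, λχ + Ω] holds for all λ ∈ ℂ if and only if (M,Γ) solves the Euler–Poisson equations Ṁ = [M,Ω] + [Γ,χ], Γ̇ = [Γ,Ω] together with Ḟ₄ = 0 for F₄ = M₁X₀ + M₃Z₀. -/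
/-!
The hat map is a Lie algebra isomorphism `(ℝ³, ⨯₃) ≅ so(3)`, so the bracket of the pencils
`λ²C + λM + Γ` and `λχ + Ω` is a polynomial in `λ` whose coefficients are hats of cross products.
The `λ³` coefficient vanishes because `C = I₂χ`, and the `λ²` coefficient is the hat of
`I₂ χ × Ω + M × χ`, whose only nonzero component is `-(M₃X₀I₁(I₂−I₃) + M₁Z₀I₃(I₁−I₂)) / (I₁I₃)`.
Squaring the Hess–Appel'rot condition gives `X₀²I₁(I₂−I₃) = Z₀²I₃(I₁−I₂)`, which together with
`M₁X₀ + M₃Z₀ = 0` kills it. The Lax equation is then an identity between polynomials of degree one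
in `λ`, equivalent to the two Euler–Poisson equations, and `Ḟ₄ = 0` holds since `F₄ ≡ 0`.
-/

open Matrix

/-- The hat map `a ↦ â` from `ℝ³` to `3×3` skew-symmetric matrices. -/
def hat (a : Fin 3 → ℝ) : Matrix (Fin 3) (Fin 3) ℝ :=
  !![0, -a 2, a 1; a 2, 0, -a 0; -a 1, a 0, 0]

theorem hat_add (a b : Fin 3 → ℝ) : hat (a + b) = hat a + hat b := by
  ext i j
  fin_cases i <;> fin_cases j <;> simp [hat, add_comm]

theorem hat_smul (c : ℝ) (a : Fin 3 → ℝ) : hat (c • a) = c • hat a := by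
  ext i j
  fin_cases i <;> fin_cases j <;> simp [hat]

theorem hat_zero : hat 0 = 0 := by
  simpa using hat_smul 0 0

theorem hat_cross (a b : Fin 3 → ℝ) : hat (a ⨯₃ b) = ⁅hat a, hat b⁆ := by
  ext i j
  fin_cases i <;> fin_cases j <;> simp [hat, Ring.lie_def, cross_apply] <;> ring

theorem lie_pencil_eq_of_sq_coeff_eq_zero {R A : Type*} [CommRing R] [Ring A] [Algebra R A]
    (c lam : R) (χ M Γ Ω : A) (h : c • ⁅χ, Ω⁆ + ⁅M, χ⁆ = 0) :
    ⁅lam ^ 2 • (c • χ) + lam • M + Γ, lam • χ + Ω⁆ = lam • (⁅M, Ω⁆ + ⁅Γ, χ⁆) + ⁅Γ, Ω⁆ := by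
  simp only [Ring.lie_def, mul_add, add_mul, smul_mul_assoc, mul_smul_comm, smul_smul] at h ⊢
  linear_combination (norm := module) lam ^ 2 • h

theorem forall_hasDerivAt_add_smul_add_iff {𝕜 F : Type*} [NontriviallyNormedField 𝕜]
    [NormedAddCommGroup F] [NormedSpace 𝕜 F] {c f g : 𝕜 → F} {f' g' : F} {t : 𝕜} :
    (∀ lam : 𝕜, HasDerivAt (fun s => c lam + lam • f s + g s) (lam • f' + g') t) ↔
      HasDerivAt f f' t ∧ HasDerivAt g g' t := by
  refine ⟨fun h => ?_, fun ⟨hf, hg⟩ lam => ?_⟩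
  · have hg : HasDerivAt g g' t := by
      simpa [hasDerivAt_const_add_iff] using h 0
    refine ⟨?_, hg⟩
    convert ((h 1).sub hg).add_const (-c 1) using 1
    · ext s; simp
    · simp
  · simpa [add_assoc] using ((hf.const_smul lam).add hg).const_add (c lam)

theorem sq_mul_eq_of_mul_sqrt_add_mul_sqrt_eq_zero {x z p q : ℝ} (hp : 0 ≤ p) (hq : 0 ≤ q)
    (h : x * √p + z * √q = 0) : x ^ 2 * p = z ^ 2 * q := by
  have hx : x * √p = -(z * √q) := eq_neg_of_add_eq_zero_left h
  calc x ^ 2 * p = (x * √p) ^ 2 := by rw [mul_pow, Real.sq_sqrt hp]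
    _ = (z * √q) ^ 2 := by rw [hx, neg_sq]
    _ = z ^ 2 * q := by rw [mul_pow, Real.sq_sqrt hq]

theorem mul_add_mul_eq_zero_of_sq_mul_eq {x z p q a b : ℝ} (hsq : x ^ 2 * p = z ^ 2 * q)
    (hab : a * x + b * z = 0) : b * x * p + a * z * q = 0 := by
  -- the square of the left side is a combination of its products with `x` and `z`, both zero
  have : (b * x * p + a * z * q) ^ 2 = 0 := by
    linear_combination (b ^ 2 * p - a ^ 2 * q) * hsq + (b * p * z * q + a * q * x * p) * hab
  exact pow_eq_zero_iff two_ne_zero |>.mp this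

theorem smul_cross_add_cross_eq_zero {I1 I2 I3 X0 Z0 : ℝ} (hI1 : I1 ≠ 0) (hI2 : I2 ≠ 0)
    (hI3 : I3 ≠ 0) (m Ω : Fin 3 → ℝ) (hΩ : ∀ i, Ω i = m i / ![I1, I2, I3] i)
    (h : m 2 * X0 * (I1 * (I2 - I3)) + m 0 * Z0 * (I3 * (I1 - I2)) = 0) :
    I2 • (![X0, 0, Z0] ⨯₃ Ω) + m ⨯₃ ![X0, 0, Z0] = 0 := by
  ext i
  fin_cases i <;>
    simp only [cross_apply, hΩ, Pi.add_apply, Pi.smul_apply, Pi.zero_apply, smul_eq_mul,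
      Fin.zero_eta, Fin.mk_one, Fin.reduceFinMk, cons_val] <;>
    field_simp
  · ring
  · linear_combination -h
  · ring

theorem hess_appelrot_lax_representation_general
    (I1 I2 I3 X0 Z0 : ℝ)
    (hI : I1 > I2 ∧ I2 > I3 ∧ I3 > 0)
    (hHA : X0 * Real.sqrt (I1 * (I2 - I3)) + Z0 * Real.sqrt (I3 * (I1 - I2)) = 0)
    (χ : Fin 3 → ℝ) (hχ : χ = ![X0, 0, Z0])
    (m γ : ℝ → Fin 3 → ℝ)
    (Ω : ℝ → Fin 3 → ℝ) (hΩ : ∀ t i, Ω t i = m t i / ![I1, I2, I3] i)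
    (hinv : ∀ t, m t 0 * X0 + m t 2 * Z0 = 0) :
    (∀ (lam t : ℝ) (i j : Fin 3),
        HasDerivAt (fun s => (lam ^ 2 • (I2 • hat χ) + lam • hat (m s) + hat (γ s)) i j)
          ((⁅lam ^ 2 • (I2 • hat χ) + lam • hat (m t) + hat (γ t),
             lam • hat χ + hat (Ω t)⁆ : Matrix (Fin 3) (Fin 3) ℝ) i j) t)
    ↔
    ((∀ (t : ℝ) (i j : Fin 3),
        HasDerivAt (fun s => hat (m s) i j)
          ((⁅hat (m t), hat (Ω t)⁆ + ⁅hat (γ t), hat χ⁆ : Matrix (Fin 3) (Fin 3) ℝ) i j) t) ∧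
     (∀ (t : ℝ) (i j : Fin 3),
        HasDerivAt (fun s => hat (γ s) i j)
          ((⁅hat (γ t), hat (Ω t)⁆ : Matrix (Fin 3) (Fin 3) ℝ) i j) t) ∧
     (∀ t : ℝ, HasDerivAt (fun s => m s 0 * X0 + m s 2 * Z0) 0 t)) := by
  obtain ⟨h12, h23, h3⟩ := hI
  have hsq := sq_mul_eq_of_mul_sqrt_add_mul_sqrt_eq_zero
    (by nlinarith : 0 ≤ I1 * (I2 - I3)) (by nlinarith : 0 ≤ I3 * (I1 - I2)) hHA
  have hsq_coeff : ∀ t, I2 • ⁅hat χ, hat (Ω t)⁆ + ⁅hat (m t), hat χ⁆ = 0 := fun t => by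
    rw [← hat_cross, ← hat_cross, ← hat_smul, ← hat_add, hχ,
      smul_cross_add_cross_eq_zero (by linarith : (0 : ℝ) < I1).ne' (by linarith : (0 : ℝ) < I2).ne'
        h3.ne' (m t) (Ω t) (hΩ t) (mul_add_mul_eq_zero_of_sq_mul_eq hsq (hinv t)), hat_zero]
  have hpencil : ∀ lam t, ⁅lam ^ 2 • (I2 • hat χ) + lam • hat (m t) + hat (γ t),
      lam • hat χ + hat (Ω t)⁆ =
        lam • (⁅hat (m t), hat (Ω t)⁆ + ⁅hat (γ t), hat χ⁆) + ⁅hat (γ t), hat (Ω t)⁆ :=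
    fun lam t => lie_pencil_eq_of_sq_coeff_eq_zero _ _ _ _ _ _ (hsq_coeff t)
  have hconserved : ∀ t, HasDerivAt (fun s => m s 0 * X0 + m s 2 * Z0) 0 t := fun t => by
    simpa only [hinv] using hasDerivAt_const t (0 : ℝ)
  simp only [hpencil, Matrix.add_apply, Matrix.smul_apply]
  refine ⟨fun h => ⟨fun t i j => (forall_hasDerivAt_add_smul_add_iff.1 fun lam => h lam t i j).1,
    fun t i j => (forall_hasDerivAt_add_smul_add_iff.1 fun lam => h lam t i j).2, hconserved⟩,
    fun ⟨hM, hG, _⟩ lam t i j => ?_⟩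
  exact (forall_hasDerivAt_add_smul_add_iff (c := fun lam => lam ^ 2 • I2 • hat χ i j)).2
    ⟨hM t i j, hG t i j⟩ lam

/-- Under the Hess–Appel'rot conditions and the invariant relation
`M₁X₀ + M₃Z₀ = 0`, the Lax equation
`d/dt(λ²C + λM + Γ) = [λ²C + λM + Γ, λχ + Ω]` (with `C = I₂χ`) holds for all
`λ` iff `(M,Γ)` solves the matrix Euler–Poisson equations
`Ṁ = [M,Ω] + [Γ,χ]`, `Γ̇ = [Γ,Ω]` together with `Ḟ₄ = 0` for
`F₄ = M₁X₀ + M₃Z₀`. -/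
theorem hess_appelrot_lax_representation
    (I1 I2 I3 X0 Z0 : ℝ)
    (hI : I1 > I2 ∧ I2 > I3 ∧ I3 > 0)
    (hHA : X0 * Real.sqrt (I1 * (I2 - I3)) + Z0 * Real.sqrt (I3 * (I1 - I2)) = 0)
    (χ : Fin 3 → ℝ) (hχ : χ = ![X0, 0, Z0])
    (m γ : ℝ → Fin 3 → ℝ)
    (Ω : ℝ → Fin 3 → ℝ) (hΩ : ∀ t i, Ω t i = m t i / ![I1, I2, I3] i)
    (hm : Differentiable ℝ m) (hγ : Differentiable ℝ γ)
    (hinv : ∀ t, m t 0 * X0 + m t 2 * Z0 = 0) :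
    (∀ (lam t : ℝ) (i j : Fin 3),
        HasDerivAt (fun s => (lam ^ 2 • (I2 • hat χ) + lam • hat (m s) + hat (γ s)) i j)
          ((⁅lam ^ 2 • (I2 • hat χ) + lam • hat (m t) + hat (γ t),
             lam • hat χ + hat (Ω t)⁆ : Matrix (Fin 3) (Fin 3) ℝ) i j) t)
    ↔
    ((∀ (t : ℝ) (i j : Fin 3),
        HasDerivAt (fun s => hat (m s) i j)
          ((⁅hat (m t), hat (Ω t)⁆ + ⁅hat (γ t), hat χ⁆ : Matrix (Fin 3) (Fin 3) ℝ) i j) t) ∧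
     (∀ (t : ℝ) (i j : Fin 3),
        HasDerivAt (fun s => hat (γ s) i j)
          ((⁅hat (γ t), hat (Ω t)⁆ : Matrix (Fin 3) (Fin 3) ℝ) i j) t) ∧
     (∀ t : ℝ, HasDerivAt (fun s => m s 0 * X0 + m s 2 * Z0) 0 t)) :=
  hess_appelrot_lax_representation_general I1 I2 I3 X0 Z0 hI hHA χ hχ m γ Ω hΩ hinv
end

section
/- Consider the equations Ṁ = [M,Ω] + [Γ,χ], Γ̇ = [Γ,Ω] on so(4) × so(4) with Ω = JM + MJ, where J has entries J₁₁ = J₂₂ = J₁, J₃₃ = J₄₄ = J₃, J₁₃ = J₃₁ = J_{13}, J₂₄ = J₄₂ = J_{24} (all other entries zero), and χ is skew-symmetric with only nonzero entries χ₁₂ = −χ₂₁. Then along any solution: Ṁ₁₂ = J₁₃(M₁₃M₁₂ + M₂₄M₃₄) + J₂₄(M₁₃M₃₄ + M₁₂M₂₄) and Ṁ₃₄ = −J₁₃(M₁₃M₃₄ + M₁₂M₂₄) − J₂₄(M₁₃M₁₂ + M₂₄M₃₄). Consequently the set {M₁₂ = 0, M₃₄ = 0} is invariant under the flow. -/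
open Matrix Set

/-!
Both brackets are computed entrywise: the `χ`-term contributes `χ₁₂ (Γ₁₁ - Γ₂₂)` to `Ṁ₁₂` and
nothing to `Ṁ₃₄`, so it drops out for skew `Γ`, and what remains is the quadratic part of
`[M, JM + MJ]`. Written with `a = J₁₃ M₁₃ + J₂₄ M₂₄` and `b = J₁₃ M₂₄ + J₂₄ M₁₃`, these are the
linear equations `Ṁ₁₂ = a M₁₂ + b M₃₄`, `Ṁ₃₄ = -b M₁₂ - a M₃₄` in `(M₁₂, M₃₄)` with continuous
coefficients, so by Grönwall's inequality a solution vanishing at one time vanishes at all times.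
-/

section ZeroSolutions

variable {E : Type*} [NormedAddCommGroup E] [NormedSpace ℝ E]

theorem eq_zero_of_norm_deriv_le_mul_norm_of_eq_zero_right {f f' : ℝ → E} {C : ℝ → ℝ}
    {t₀ t : ℝ} (hC : Continuous C) (hf : ∀ s, HasDerivAt f (f' s) s)
    (bound : ∀ s, ‖f' s‖ ≤ C s * ‖f s‖) (h₀ : f t₀ = 0) (ht : t₀ ≤ t) : f t = 0 := by
  obtain ⟨K, hK⟩ : BddAbove (C '' Icc t₀ t) := isCompact_Icc.bddAbove_image hC.continuousOn
  refine eq_zero_of_abs_deriv_le_mul_abs_self_of_eq_zero_right (K := K)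
    (continuous_iff_continuousAt.2 fun s => (hf s).continuousAt).continuousOn
    (fun s _ => (hf s).hasDerivWithinAt) h₀ (fun s hs => ?_) t ⟨ht, le_rfl⟩
  exact (bound s).trans <| mul_le_mul_of_nonneg_right
    (hK ⟨s, Ico_subset_Icc_self hs, rfl⟩) (norm_nonneg _)

theorem eq_zero_of_norm_deriv_le_mul_norm {f f' : ℝ → E} {C : ℝ → ℝ} {t₀ : ℝ}
    (hC : Continuous C) (hf : ∀ s, HasDerivAt f (f' s) s)
    (bound : ∀ s, ‖f' s‖ ≤ C s * ‖f s‖) (h₀ : f t₀ = 0) (t : ℝ) : f t = 0 := by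
  rcases le_total t₀ t with h | h
  · exact eq_zero_of_norm_deriv_le_mul_norm_of_eq_zero_right hC hf bound h₀ h
  · have hrev : ∀ s, HasDerivAt (fun s => f (-s)) (-f' (-s)) s := fun s =>
      ((hf (-s)).scomp s (hasDerivAt_neg s)).congr_deriv (by simp)
    simpa using eq_zero_of_norm_deriv_le_mul_norm_of_eq_zero_right (hC.comp continuous_neg)
      hrev (fun s => by simpa using bound (-s)) (by simpa using h₀) (neg_le_neg h)

end ZeroSolutions

theorem abs_mul_add_mul_le (a b x y : ℝ) : |a * x + b * y| ≤ (|a| + |b|) * max |x| |y| := by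
  calc |a * x + b * y| ≤ |a| * |x| + |b| * |y| := by
        simpa only [abs_mul] using abs_add_le (a * x) (b * y)
    _ ≤ |a| * max |x| |y| + |b| * max |x| |y| := by
        gcongr
        exacts [le_max_left _ _, le_max_right _ _]
    _ = (|a| + |b|) * max |x| |y| := by ring

theorem eq_zero_of_planar_linear_ode {x y a b c d : ℝ → ℝ} {t₀ : ℝ}
    (ha : Continuous a) (hb : Continuous b) (hc : Continuous c) (hd : Continuous d)
    (hx : ∀ t, HasDerivAt x (a t * x t + b t * y t) t)
    (hy : ∀ t, HasDerivAt y (c t * x t + d t * y t) t)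
    (hx₀ : x t₀ = 0) (hy₀ : y t₀ = 0) (t : ℝ) : x t = 0 ∧ y t = 0 := by
  have bound : ∀ s, ‖(a s * x s + b s * y s, c s * x s + d s * y s)‖
      ≤ (|a s| + |b s| + (|c s| + |d s|)) * ‖(x s, y s)‖ := fun s => by
    simp only [Prod.norm_def, Real.norm_eq_abs]
    have hab := abs_mul_add_mul_le (a s) (b s) (x s) (y s)
    have hcd := abs_mul_add_mul_le (c s) (d s) (x s) (y s)
    have hmax : 0 ≤ max |x s| |y s| := (abs_nonneg _).trans (le_max_left _ _)
    refine max_le ?_ ?_ <;> nlinarith [abs_nonneg (a s), abs_nonneg (b s), abs_nonneg (c s),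
      abs_nonneg (d s)]
  have h := eq_zero_of_norm_deriv_le_mul_norm (f := fun s => (x s, y s)) (t₀ := t₀)
    (C := fun s => |a s| + |b s| + (|c s| + |d s|)) (by fun_prop)
    (fun s => (hx s).prodMk (hy s)) bound (by simp [hx₀, hy₀]) t
  exact Prod.mk_eq_zero.mp h

section Brackets

variable {R : Type*} [CommRing R] {Γ χ : Matrix (Fin 4) (Fin 4) R} {c : R}

theorem lie_apply_two_three_eq_zero
    (hχ : χ = !![0, c, 0, 0; -c, 0, 0, 0; 0, 0, 0, 0; 0, 0, 0, 0]) : ⁅Γ, χ⁆ 2 3 = 0 := by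
  rw [hχ]
  simp [Ring.lie_def, mul_apply, vecMul, dotProduct, Fin.sum_univ_four]

variable [IsAddTorsionFree R]

theorem Matrix.eq_of_transpose_eq_neg_fin_four {M : Matrix (Fin 4) (Fin 4) R} (hM : Mᵀ = -M) :
    M = !![0, M 0 1, M 0 2, M 0 3; -M 0 1, 0, M 1 2, M 1 3;
      -M 0 2, -M 1 2, 0, M 2 3; -M 0 3, -M 1 3, -M 2 3, 0] := by
  have h : ∀ i j, M j i = -M i j := fun i j => by simpa using congrFun (congrFun hM i) j
  have hd : ∀ i, M i i = 0 := fun i => self_eq_neg.mp (h i i)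
  ext i j
  fin_cases i <;> fin_cases j <;> simp [hd, h 0 1, h 0 2, h 0 3, h 1 2, h 1 3, h 2 3]

theorem lie_apply_zero_one_eq_zero_of_transpose_eq_neg (hΓ : Γᵀ = -Γ)
    (hχ : χ = !![0, c, 0, 0; -c, 0, 0, 0; 0, 0, 0, 0; 0, 0, 0, 0]) : ⁅Γ, χ⁆ 0 1 = 0 := by
  rw [eq_of_transpose_eq_neg_fin_four hΓ, hχ]
  simp [Ring.lie_def]

variable {M J : Matrix (Fin 4) (Fin 4) R} {J1 J3 J13 J24 : R}

theorem lie_mul_add_mul_apply_zero_one (hM : Mᵀ = -M)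
    (hJ : J = !![J1, 0, J13, 0; 0, J1, 0, J24; J13, 0, J3, 0; 0, J24, 0, J3]) :
    ⁅M, J * M + M * J⁆ 0 1 = J13 * (M 0 2 * M 0 1 + M 1 3 * M 2 3)
      + J24 * (M 0 2 * M 2 3 + M 0 1 * M 1 3) := by
  rw [eq_of_transpose_eq_neg_fin_four hM, hJ]
  simp [Ring.lie_def]
  ring

theorem lie_mul_add_mul_apply_two_three (hM : Mᵀ = -M)
    (hJ : J = !![J1, 0, J13, 0; 0, J1, 0, J24; J13, 0, J3, 0; 0, J24, 0, J3]) :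
    ⁅M, J * M + M * J⁆ 2 3 = -(J13 * (M 0 2 * M 2 3 + M 0 1 * M 1 3))
      - J24 * (M 0 2 * M 0 1 + M 1 3 * M 2 3) := by
  rw [eq_of_transpose_eq_neg_fin_four hM, hJ]
  simp [Ring.lie_def]
  ring

end Brackets

theorem four_dim_hess_appelrot_invariant_relations_general
    (J1 J3 J13 J24 chi12 : ℝ)
    (M Γ : ℝ → Matrix (Fin 4) (Fin 4) ℝ)
    (hskewM : ∀ t, (M t)ᵀ = -(M t)) (hskewΓ : ∀ t, (Γ t)ᵀ = -(Γ t))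
    (J : Matrix (Fin 4) (Fin 4) ℝ)
    (hJ : J = !![J1, 0, J13, 0; 0, J1, 0, J24; J13, 0, J3, 0; 0, J24, 0, J3])
    (χ : Matrix (Fin 4) (Fin 4) ℝ)
    (hχ : χ = !![0, chi12, 0, 0; -chi12, 0, 0, 0; 0, 0, 0, 0; 0, 0, 0, 0])
    (Ω : ℝ → Matrix (Fin 4) (Fin 4) ℝ) (hΩ : ∀ t, Ω t = J * M t + M t * J)
    (hM : ∀ (t : ℝ) (i j : Fin 4),
      HasDerivAt (fun s => M s i j)
        ((⁅M t, Ω t⁆ + ⁅Γ t, χ⁆ : Matrix (Fin 4) (Fin 4) ℝ) i j) t) :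
    (∀ t, HasDerivAt (fun s => M s 0 1)
        (J13 * (M t 0 2 * M t 0 1 + M t 1 3 * M t 2 3)
          + J24 * (M t 0 2 * M t 2 3 + M t 0 1 * M t 1 3)) t) ∧
    (∀ t, HasDerivAt (fun s => M s 2 3)
        (-(J13 * (M t 0 2 * M t 2 3 + M t 0 1 * M t 1 3))
          - J24 * (M t 0 2 * M t 0 1 + M t 1 3 * M t 2 3)) t) ∧
    ((M 0 0 1 = 0 ∧ M 0 2 3 = 0) → ∀ t, M t 0 1 = 0 ∧ M t 2 3 = 0) := by
  have d01 : ∀ t, HasDerivAt (fun s => M s 0 1)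
      (J13 * (M t 0 2 * M t 0 1 + M t 1 3 * M t 2 3)
        + J24 * (M t 0 2 * M t 2 3 + M t 0 1 * M t 1 3)) t := fun t =>
    (hM t 0 1).congr_deriv <| by
      rw [Matrix.add_apply, hΩ, lie_mul_add_mul_apply_zero_one (hskewM t) hJ,
        lie_apply_zero_one_eq_zero_of_transpose_eq_neg (hskewΓ t) hχ, add_zero]
  have d23 : ∀ t, HasDerivAt (fun s => M s 2 3)
      (-(J13 * (M t 0 2 * M t 2 3 + M t 0 1 * M t 1 3))
        - J24 * (M t 0 2 * M t 0 1 + M t 1 3 * M t 2 3)) t := fun t =>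
    (hM t 2 3).congr_deriv <| by
      rw [Matrix.add_apply, hΩ, lie_mul_add_mul_apply_two_three (hskewM t) hJ,
        lie_apply_two_three_eq_zero hχ, add_zero]
  refine ⟨d01, d23, fun ⟨h01, h23⟩ => ?_⟩
  have hcont : ∀ i j, Continuous fun t => M t i j := fun i j =>
    continuous_iff_continuousAt.2 fun t => (hM t i j).continuousAt
  have ha : Continuous fun t => J13 * M t 0 2 + J24 * M t 1 3 := by
    have := hcont 0 2; have := hcont 1 3; fun_prop
  have hb : Continuous fun t => J13 * M t 1 3 + J24 * M t 0 2 := by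
    have := hcont 0 2; have := hcont 1 3; fun_prop
  exact eq_zero_of_planar_linear_ode ha hb hb.neg ha.neg
    (fun t => (d01 t).congr_deriv (by ring))
    (fun t => (d23 t).congr_deriv (by simp only [Pi.neg_apply]; ring)) h01 h23

/-- For the four-dimensional Hess–Appel'rot system on `so(4) × so(4)`:
the stated evolution equations for `M₁₂` and `M₃₄` hold, and the set
`{M₁₂ = 0, M₃₄ = 0}` is invariant under the flow. -/
theorem four_dim_hess_appelrot_invariant_relations
    (J1 J3 J13 J24 chi12 : ℝ)
    (M Γ : ℝ → Matrix (Fin 4) (Fin 4) ℝ)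
    (hskewM : ∀ t, (M t)ᵀ = -(M t)) (hskewΓ : ∀ t, (Γ t)ᵀ = -(Γ t))
    (J : Matrix (Fin 4) (Fin 4) ℝ)
    (hJ : J = !![J1, 0, J13, 0; 0, J1, 0, J24; J13, 0, J3, 0; 0, J24, 0, J3])
    (χ : Matrix (Fin 4) (Fin 4) ℝ)
    (hχ : χ = !![0, chi12, 0, 0; -chi12, 0, 0, 0; 0, 0, 0, 0; 0, 0, 0, 0])
    (Ω : ℝ → Matrix (Fin 4) (Fin 4) ℝ) (hΩ : ∀ t, Ω t = J * M t + M t * J)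
    (hM : ∀ (t : ℝ) (i j : Fin 4),
      HasDerivAt (fun s => M s i j)
        ((⁅M t, Ω t⁆ + ⁅Γ t, χ⁆ : Matrix (Fin 4) (Fin 4) ℝ) i j) t)
    (hΓ : ∀ (t : ℝ) (i j : Fin 4),
      HasDerivAt (fun s => Γ s i j)
        ((⁅Γ t, Ω t⁆ : Matrix (Fin 4) (Fin 4) ℝ) i j) t) :
    (∀ t, HasDerivAt (fun s => M s 0 1)
        (J13 * (M t 0 2 * M t 0 1 + M t 1 3 * M t 2 3)
          + J24 * (M t 0 2 * M t 2 3 + M t 0 1 * M t 1 3)) t) ∧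
    (∀ t, HasDerivAt (fun s => M s 2 3)
        (-(J13 * (M t 0 2 * M t 2 3 + M t 0 1 * M t 1 3))
          - J24 * (M t 0 2 * M t 0 1 + M t 1 3 * M t 2 3)) t) ∧
    ((M 0 0 1 = 0 ∧ M 0 2 3 = 0) → ∀ t, M t 0 1 = 0 ∧ M t 2 3 = 0) :=
  four_dim_hess_appelrot_invariant_relations_general J1 J3 J13 J24 chi12 M Γ hskewM hskewΓ J hJ χ hχ
    Ω hΩ hM
end

section
/- Along any solution of the Lagrange bitop equations Ṁ = [M,Ω] + [Γ,χ], Γ̇ = [Γ,Ω] on so(4) × so(4) with I₁ = I₂ = a, I₃ = I₄ = b (so M = IΩ + ΩI), and χ skew with nonzero entries only χ₁₂, χ₃₄, the quantities B = 2(C₁₂M₁₂ + C₃₄M₃₄) and H = C₃₄M₁₂ + C₁₂M₃₄, where C = (a+b)χ, are first integrals (have zero time derivative). -/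
open Matrix

/-!
Since `M i k * Ω k j - Ω i k * M k j = (I i - I j) * Ω i k * Ω k j`, the entries `[M, Ω]₁₂` and
`[M, Ω]₃₄` vanish because `I₁ = I₂` and `I₃ = I₄`; and for the block-diagonal `χ` one has
`[Γ, χ]₁₂ = χ₁₂ (Γ₁₁ - Γ₂₂)`, `[Γ, χ]₃₄ = χ₃₄ (Γ₃₃ - Γ₄₄)`, which vanish as `Γ` is skew.
Hence `M₁₂` and `M₃₄` are separately conserved, and so are `B` and `H`.
-/

theorem Matrix.lie_apply_eq_zero_of_apply_eq_add_mul {n R : Type*} [Fintype n] [CommRing R]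
    {I : n → R} {M Ω : Matrix n n R} (hM : ∀ i j, M i j = (I i + I j) * Ω i j)
    {i j : n} (hij : I i = I j) : ⁅M, Ω⁆ i j = 0 := by
  simp only [Ring.lie_def, sub_apply, mul_apply, ← Finset.sum_sub_distrib, hM, hij]
  exact Finset.sum_eq_zero fun k _ => by ring

theorem Matrix.diag_eq_zero_of_transpose_eq_neg {n R : Type*} [AddGroup R] [IsAddTorsionFree R]
    {A : Matrix n n R} (hA : Aᵀ = -A) (i : n) : A i i = 0 :=
  self_eq_neg.mp (congr_fun₂ hA i i)

theorem lie_blockSkew_apply_zero_one (Γ : Matrix (Fin 4) (Fin 4) ℝ) (c d : ℝ) :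
    ⁅Γ, !![0, c, 0, 0; -c, 0, 0, 0; 0, 0, 0, d; 0, 0, -d, 0]⁆ 0 1 = c * (Γ 0 0 - Γ 1 1) := by
  simp [Ring.lie_def, mul_apply, vecMul, dotProduct, Fin.sum_univ_four]
  ring

theorem lie_blockSkew_apply_two_three (Γ : Matrix (Fin 4) (Fin 4) ℝ) (c d : ℝ) :
    ⁅Γ, !![0, c, 0, 0; -c, 0, 0, 0; 0, 0, 0, d; 0, 0, -d, 0]⁆ 2 3 = d * (Γ 2 2 - Γ 3 3) := by
  simp [Ring.lie_def, mul_apply, vecMul, dotProduct, Fin.sum_univ_four]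
  ring

theorem lagrange_bitop_first_integrals_general
    (a b chi12 chi34 : ℝ)
    (M Γ : ℝ → Matrix (Fin 4) (Fin 4) ℝ)
    (hskewΓ : ∀ t, (Γ t)ᵀ = -(Γ t))
    (Iv : Fin 4 → ℝ) (hIv : Iv = ![a, a, b, b])
    (Ω : ℝ → Matrix (Fin 4) (Fin 4) ℝ)
    (hΩ : ∀ t i j, M t i j = (Iv i + Iv j) * Ω t i j)
    (χ : Matrix (Fin 4) (Fin 4) ℝ)
    (hχ : χ = !![0, chi12, 0, 0; -chi12, 0, 0, 0; 0, 0, 0, chi34; 0, 0, -chi34, 0])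
    (C : Matrix (Fin 4) (Fin 4) ℝ)
    (hM : ∀ (t : ℝ) (i j : Fin 4),
      HasDerivAt (fun s => M s i j)
        ((⁅M t, Ω t⁆ + ⁅Γ t, χ⁆ : Matrix (Fin 4) (Fin 4) ℝ) i j) t) :
    (∀ t, HasDerivAt (fun s => 2 * (C 0 1 * M s 0 1 + C 2 3 * M s 2 3)) 0 t) ∧
    (∀ t, HasDerivAt (fun s => C 2 3 * M s 0 1 + C 0 1 * M s 2 3) 0 t) := by
  subst hIv hχ
  have hdiag t := diag_eq_zero_of_transpose_eq_neg (hskewΓ t)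
  have hM01 t : HasDerivAt (fun s => M s 0 1) 0 t := by
    simpa [lie_apply_eq_zero_of_apply_eq_add_mul (hΩ t) (i := 0) (j := 1) rfl,
      lie_blockSkew_apply_zero_one, hdiag] using hM t 0 1
  have hM23 t : HasDerivAt (fun s => M s 2 3) 0 t := by
    simpa [lie_apply_eq_zero_of_apply_eq_add_mul (hΩ t) (i := 2) (j := 3) rfl,
      lie_blockSkew_apply_two_three, hdiag] using hM t 2 3
  constructor <;> intro t
  · exact ((((hM01 t).const_mul _).add ((hM23 t).const_mul _)).const_mul 2).congr_deriv (by simp)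
  · exact (((hM01 t).const_mul _).add ((hM23 t).const_mul _)).congr_deriv (by simp)

/-- For the Lagrange bitop (`I₁ = I₂ = a`, `I₃ = I₄ = b`, `χ` skew with only
`χ₁₂, χ₃₄` nonzero, `C = (a+b)χ`), the quantities
`B = 2(C₁₂M₁₂ + C₃₄M₃₄)` and `H = C₃₄M₁₂ + C₁₂M₃₄` are first integrals. -/
theorem lagrange_bitop_first_integrals
    (a b chi12 chi34 : ℝ) (hab : a ≠ b)
    (M Γ : ℝ → Matrix (Fin 4) (Fin 4) ℝ)
    (hskewM : ∀ t, (M t)ᵀ = -(M t)) (hskewΓ : ∀ t, (Γ t)ᵀ = -(Γ t))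
    (Iv : Fin 4 → ℝ) (hIv : Iv = ![a, a, b, b])
    (Ω : ℝ → Matrix (Fin 4) (Fin 4) ℝ)
    (hΩ : ∀ t i j, M t i j = (Iv i + Iv j) * Ω t i j)
    (χ : Matrix (Fin 4) (Fin 4) ℝ)
    (hχ : χ = !![0, chi12, 0, 0; -chi12, 0, 0, 0; 0, 0, 0, chi34; 0, 0, -chi34, 0])
    (C : Matrix (Fin 4) (Fin 4) ℝ) (hC : C = (a + b) • χ)
    (hM : ∀ (t : ℝ) (i j : Fin 4),
      HasDerivAt (fun s => M s i j)
        ((⁅M t, Ω t⁆ + ⁅Γ t, χ⁆ : Matrix (Fin 4) (Fin 4) ℝ) i j) t)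
    (hΓ : ∀ (t : ℝ) (i j : Fin 4),
      HasDerivAt (fun s => Γ s i j)
        ((⁅Γ t, Ω t⁆ : Matrix (Fin 4) (Fin 4) ℝ) i j) t) :
    (∀ t, HasDerivAt (fun s => 2 * (C 0 1 * M s 0 1 + C 2 3 * M s 2 3)) 0 t) ∧
    (∀ t, HasDerivAt (fun s => C 2 3 * M s 0 1 + C 0 1 * M s 2 3) 0 t) :=
  lagrange_bitop_first_integrals_general a b chi12 chi34 M Γ hskewΓ Iv hIv Ω hΩ χ hχ C hM
end

section
/- The system Ẋ₁ = 0, Ẋ₂ = δ(Y₃ + aX₃), Ẋ₃ = −δ(Y₂ + aX₂), Ẏ₁ = (X₃Y₂ − X₂Y₃)/I₂, Ẏ₂ = (X₁Y₃ − X₃Y₁)/I₂ + aδY₃, Ẏ₃ = (X₂Y₁ − X₁Y₂)/I₂ − aδY₂ (where δ = √(X₀²+Z₀²) > 0 and a is any smooth function of (X,Y)) admits the four first integrals F₁ = X₁Y₁ + X₂Y₂ + X₃Y₃, F₂ = Y₁² + Y₂² + Y₃², H₁ = (X₁² + X₂² + X₃²)/(2I₂δ) + Y₁, and H₂ = X₁;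 i.e., each has zero derivative along any solution. -/
/-!
With `e = (1, 0, 0)` the system reads `Ẋ = δ (Y + a X) × e` and `Ẏ = I₂⁻¹ Y × X + a δ Y × e`.
Every first integral is then conserved because the triple product vanishes on repeated vectors
and is antisymmetric: `X ⬝ Y` and `|X|² / (2 I₂ δ) + e ⬝ Y` because `u ⬝ v × w = - v ⬝ u × w`,
`|Y|²` because `Ẏ ⊥ Y`, and `e ⬝ X` because `Ẋ ⊥ e`.
-/

open Matrix

theorem HasDerivAt.dotProduct {𝕜 ι : Type*} [NontriviallyNormedField 𝕜] [Fintype ι]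
    {f g : 𝕜 → ι → 𝕜} {f' g' : ι → 𝕜} {t : 𝕜}
    (hf : HasDerivAt f f' t) (hg : HasDerivAt g g' t) :
    HasDerivAt (fun s => f s ⬝ᵥ g s) (f' ⬝ᵥ g t + f t ⬝ᵥ g') t := by
  have := HasDerivAt.fun_sum (u := Finset.univ) (A := fun i s => f s i * g s i) fun i _ =>
    (hasDerivAt_pi.1 hf i).mul (hasDerivAt_pi.1 hg i)
  rwa [Finset.sum_add_distrib] at this

theorem dotProduct_cross_add_dotProduct_cross {R : Type*} [CommRing R] (u v w : Fin 3 → R) :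
    u ⬝ᵥ v ⨯₃ w + v ⬝ᵥ u ⨯₃ w = 0 := by
  rw [triple_product_permutation u, ← cross_anticomm, dotProduct_neg, neg_add_cancel]

namespace E3Family

variable {I2 δ : ℝ} {a : ℝ → ℝ} {e : Fin 3 → ℝ} {X Y : ℝ → Fin 3 → ℝ}

theorem hasDerivAt_dotProduct
    (hX : ∀ t, HasDerivAt X (δ • ((Y t + a t • X t) ⨯₃ e)) t)
    (hY : ∀ t, HasDerivAt Y (I2⁻¹ • (Y t ⨯₃ X t) + (a t * δ) • (Y t ⨯₃ e)) t) (t : ℝ) :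
    HasDerivAt (fun s => X s ⬝ᵥ Y s) 0 t := by
  refine ((hX t).dotProduct (hY t)).congr_deriv ?_
  simp only [dotProduct_comm _ (Y t), map_add, map_smul, LinearMap.add_apply,
    LinearMap.smul_apply, dotProduct_add, dotProduct_smul, dot_cross_self, dot_self_cross]
  linear_combination (a t * δ) * dotProduct_cross_add_dotProduct_cross (Y t) (X t) e

theorem hasDerivAt_dotProduct_self
    (hY : ∀ t, HasDerivAt Y (I2⁻¹ • (Y t ⨯₃ X t) + (a t * δ) • (Y t ⨯₃ e)) t) (t : ℝ) :
    HasDerivAt (fun s => Y s ⬝ᵥ Y s) 0 t := by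
  refine ((hY t).dotProduct (hY t)).congr_deriv ?_
  rw [dotProduct_comm _ (Y t), dotProduct_add, dotProduct_smul, dotProduct_smul, dot_self_cross,
    dot_self_cross]
  simp

theorem hasDerivAt_dotProduct_self_div_add_dotProduct (hδ : δ ≠ 0)
    (hX : ∀ t, HasDerivAt X (δ • ((Y t + a t • X t) ⨯₃ e)) t)
    (hY : ∀ t, HasDerivAt Y (I2⁻¹ • (Y t ⨯₃ X t) + (a t * δ) • (Y t ⨯₃ e)) t) (t : ℝ) :
    HasDerivAt (fun s => X s ⬝ᵥ X s / (2 * I2 * δ) + e ⬝ᵥ Y s) 0 t := by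
  refine ((((hX t).dotProduct (hX t)).div_const _).add
    ((hasDerivAt_const t e).dotProduct (hY t))).congr_deriv ?_
  have hXX : δ • ((Y t + a t • X t) ⨯₃ e) ⬝ᵥ X t + X t ⬝ᵥ δ • ((Y t + a t • X t) ⨯₃ e) =
      2 * δ * (X t ⬝ᵥ Y t ⨯₃ e) := by
    simp only [dotProduct_comm _ (X t), map_add, map_smul, LinearMap.add_apply,
      LinearMap.smul_apply, dotProduct_add, dotProduct_smul, dot_self_cross]
    ring
  have heY : e ⬝ᵥ (I2⁻¹ • (Y t ⨯₃ X t) + (a t * δ) • (Y t ⨯₃ e)) =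
      -(I2⁻¹ * (X t ⬝ᵥ Y t ⨯₃ e)) := by
    rw [dotProduct_add, dotProduct_smul, dotProduct_smul, dot_cross_self,
      triple_product_permutation]
    linear_combination I2⁻¹ * dotProduct_cross_add_dotProduct_cross (Y t) (X t) e
  rw [hXX, heY, zero_dotProduct]
  field_simp
  ring

theorem hasDerivAt_axis_dotProduct
    (hX : ∀ t, HasDerivAt X (δ • ((Y t + a t • X t) ⨯₃ e)) t) (t : ℝ) :
    HasDerivAt (fun s => e ⬝ᵥ X s) 0 t := by
  refine ((hasDerivAt_const t e).dotProduct (hX t)).congr_deriv ?_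
  rw [zero_dotProduct, dotProduct_smul, dot_cross_self, smul_zero, zero_add]

end E3Family

open E3Family in
theorem e3_family_four_first_integrals_general
    (I2 δ : ℝ) (hδ : 0 < δ)
    (a : ℝ → ℝ) (X Y : ℝ → Fin 3 → ℝ)
    (hX : ∀ t, HasDerivAt X
      ![0, δ * (Y t 2 + a t * X t 2), -(δ * (Y t 1 + a t * X t 1))] t)
    (hY : ∀ t, HasDerivAt Y
      ![(X t 2 * Y t 1 - X t 1 * Y t 2) / I2,
        (X t 0 * Y t 2 - X t 2 * Y t 0) / I2 + a t * δ * Y t 2,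
        (X t 1 * Y t 0 - X t 0 * Y t 1) / I2 - a t * δ * Y t 1] t) :
    (∀ t, HasDerivAt (fun s => X s 0 * Y s 0 + X s 1 * Y s 1 + X s 2 * Y s 2) 0 t) ∧
    (∀ t, HasDerivAt (fun s => Y s 0 ^ 2 + Y s 1 ^ 2 + Y s 2 ^ 2) 0 t) ∧
    (∀ t, HasDerivAt (fun s =>
        (X s 0 ^ 2 + X s 1 ^ 2 + X s 2 ^ 2) / (2 * I2 * δ) + Y s 0) 0 t) ∧
    (∀ t, HasDerivAt (fun s => X s 0) 0 t) := by
  have hX_cross : ∀ t, HasDerivAt X (δ • ((Y t + a t • X t) ⨯₃ ![1, 0, 0])) t := fun t => by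
    convert hX t using 1
    ext i; fin_cases i <;> simp [cross_apply]
    ring
  have hY_cross : ∀ t, HasDerivAt Y
      (I2⁻¹ • (Y t ⨯₃ X t) + (a t * δ) • (Y t ⨯₃ ![1, 0, 0])) t := fun t => by
    convert hY t using 1
    ext i; fin_cases i <;> simp [cross_apply] <;> ring
  refine ⟨?_, ?_, ?_, ?_⟩
  · simpa only [vec3_dotProduct] using hasDerivAt_dotProduct hX_cross hY_cross
  · simpa only [vec3_dotProduct, sq] using hasDerivAt_dotProduct_self hY_cross
  · simpa [vec3_dotProduct, sq, vecHead] using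
      hasDerivAt_dotProduct_self_div_add_dotProduct hδ.ne' hX_cross hY_cross
  · simpa [vec3_dotProduct, vecHead] using hasDerivAt_axis_dotProduct hX_cross

/-- The system on `e(3)` built from the Hess–Appel'rot Lax matrix (with an
arbitrary function `a`) admits the four first integrals
`F₁ = ⟨X,Y⟩`, `F₂ = ⟨Y,Y⟩`, `H₁ = |X|²/(2I₂δ) + Y₁`, `H₂ = X₁`. -/
theorem e3_family_four_first_integrals
    (I2 δ : ℝ) (hI2 : 0 < I2) (hδ : 0 < δ)
    (a : ℝ → ℝ) (X Y : ℝ → Fin 3 → ℝ)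
    (hX : ∀ t, HasDerivAt X
      ![0, δ * (Y t 2 + a t * X t 2), -(δ * (Y t 1 + a t * X t 1))] t)
    (hY : ∀ t, HasDerivAt Y
      ![(X t 2 * Y t 1 - X t 1 * Y t 2) / I2,
        (X t 0 * Y t 2 - X t 2 * Y t 0) / I2 + a t * δ * Y t 2,
        (X t 1 * Y t 0 - X t 0 * Y t 1) / I2 - a t * δ * Y t 1] t) :
    (∀ t, HasDerivAt (fun s => X s 0 * Y s 0 + X s 1 * Y s 1 + X s 2 * Y s 2) 0 t) ∧
    (∀ t, HasDerivAt (fun s => Y s 0 ^ 2 + Y s 1 ^ 2 + Y s 2 ^ 2) 0 t) ∧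
    (∀ t, HasDerivAt (fun s =>
        (X s 0 ^ 2 + X s 1 ^ 2 + X s 2 ^ 2) / (2 * I2 * δ) + Y s 0) 0 t) ∧
    (∀ t, HasDerivAt (fun s => X s 0) 0 t) :=
  e3_family_four_first_integrals_general I2 δ hδ a X Y hX hY
end
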